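/- arXiv:2202.10205 — 5 statements merged into one kernel-verified Lean document; each statement's English description precedes it below -/
import Mathlib

section
/- Define a Dyck path with air pockets of length n as a sequence of steps, each step being U = (1,1) or D_k = (1,−k) for some k ≥ 1, such that: no two down-steps D_j, D_k are adjacent, the path starting at height 0 never goes below height 0, and ends at height 0. Then the number of Dyck paths with air pockets with exactly n steps, for n = 0,1,2,...,11, is 1, 0, 1, 1, 2, 4, 8, 17, 37, 82, 185, 423. -/
/-- A Dyck path with air pockets, encoded as a list of vertical displacements:
each step is `1` (up-step) or `-k` for `k ≥ 1` (down-step `D_k`);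
no down-step is immediately followed by another down-step;
every prefix has nonnegative sum (never below height 0);
the total sum is 0 (ends at height 0). -/
def IsDyckAirPocket (l : List ℤ) : Prop :=
  (∀ x ∈ l, x = 1 ∨ x ≤ -1) ∧
  l.Chain' (fun a b => a ≤ -1 → b = 1) ∧
  (∀ p : List ℤ, p <+: l → 0 ≤ p.sum) ∧
  l.sum = 0

/-!
Removing the first step of a path with air pockets that starts at height `h` leaves either a path
from height `h + 1` (after an up-step) or, provided the previous step was not a down-step, a path
from height `h - k` that must begin with an up-step (after `D_k`, `1 ≤ k ≤ h`). Enumerating paths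
along this decomposition, their number satisfies the recurrence `airPocketCount`, which is then
evaluated for `n ≤ 11`.
-/

open Finset

theorem List.forall_prefix_cons_iff {α : Type*} {P : List α → Prop} {a : α} {l : List α} :
    (∀ p, p <+: a :: l → P p) ↔ P [] ∧ ∀ q, q <+: l → P (a :: q) := by
  simp only [List.prefix_cons_iff]
  grind

/-- The remainder of a path with air pockets after a prefix ending at height `h`; `downOK` is
`false` when that prefix ended with a down-step, so that the remainder must start with an up-step. -/
def IsAirPocketSuffix (h : ℕ) (downOK : Bool) (l : List ℤ) : Prop :=
  (∀ x ∈ l, x = 1 ∨ x ≤ -1) ∧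
  l.IsChain (fun a b => a ≤ -1 → b = 1) ∧
  (downOK = false → ∀ x ∈ l.head?, x = 1) ∧
  (∀ p, p <+: l → 0 ≤ (h : ℤ) + p.sum) ∧
  (h : ℤ) + l.sum = 0

namespace IsAirPocketSuffix

variable {h : ℕ} {downOK : Bool} {x : ℤ} {l : List ℤ}

theorem nil_iff : IsAirPocketSuffix h downOK [] ↔ h = 0 := by
  simp [IsAirPocketSuffix, List.prefix_nil]

theorem cons_iff : IsAirPocketSuffix h downOK (x :: l) ↔
    (x = 1 ∧ IsAirPocketSuffix (h + 1) true l) ∨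
    (downOK = true ∧ ∃ k ∈ Icc 1 h, x = -k ∧ IsAirPocketSuffix (h - k) false l) := by
  simp only [IsAirPocketSuffix, List.forall_mem_cons, List.isChain_cons, List.head?_cons,
    List.forall_prefix_cons_iff, List.sum_cons, List.sum_nil, Option.mem_def,
    Option.some.injEq, forall_eq', ← add_assoc, add_zero, Nat.cast_add, Nat.cast_one]
  constructor
  · rintro ⟨⟨rfl | hx, hl⟩, ⟨hhead, hchain⟩, hstart, ⟨-, hpre⟩, hsum⟩
    · exact Or.inl ⟨rfl, hl, hchain, nofun, hpre, hsum⟩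
    · have hdown : downOK = true := by
        cases downOK
        · linarith [hstart rfl]
        · rfl
      have hstep : 0 ≤ (h : ℤ) + x := by simpa using hpre [] List.nil_prefix
      obtain ⟨k, rfl⟩ : ∃ k : ℕ, x = -k := ⟨(-x).toNat, by omega⟩
      refine Or.inr ⟨hdown, k, mem_Icc.mpr ⟨by omega, by omega⟩, rfl, hl, hchain,
        fun _ y hy => hhead y hy hx, fun p hp => ?_, by omega⟩
      have := hpre p hp
      omega
  · rintro (⟨rfl, hl, hchain, -, hpre, hsum⟩ | ⟨rfl, k, hk, rfl, hl, hchain, hhead, hpre, hsum⟩)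
    · exact ⟨⟨Or.inl rfl, hl⟩, ⟨by simp, hchain⟩, fun _ => rfl, ⟨by positivity, hpre⟩, hsum⟩
    · rw [mem_Icc] at hk
      refine ⟨⟨Or.inr (by omega), hl⟩, ⟨fun y hy _ => hhead trivial y hy, hchain⟩, nofun,
        ⟨by positivity, fun p hp => ?_⟩, by omega⟩
      have := hpre p hp
      omega

end IsAirPocketSuffix

theorem isDyckAirPocket_iff {l : List ℤ} : IsDyckAirPocket l ↔ IsAirPocketSuffix 0 true l := by
  simp only [IsDyckAirPocket, IsAirPocketSuffix, Bool.true_eq_false, false_implies, true_and,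
    CharP.cast_eq_zero, zero_add]
  rfl

def airPocketSuffixes : ℕ → ℕ → Bool → Finset (List ℤ)
  | 0, h, _ => if h = 0 then {[]} else ∅
  | n + 1, h, downOK =>
    (airPocketSuffixes n (h + 1) true).image (List.cons 1) ∪
      if downOK then
        (Icc 1 h).biUnion fun k => (airPocketSuffixes n (h - k) false).image (List.cons (-k))
      else ∅

def airPocketCount : ℕ → ℕ → Bool → ℕ
  | 0, h, _ => if h = 0 then 1 else 0
  | n + 1, h, downOK =>
    airPocketCount n (h + 1) true +
      if downOK then ∑ k ∈ Icc 1 h, airPocketCount n (h - k) false else 0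

theorem mem_airPocketSuffixes {n h : ℕ} {downOK : Bool} {l : List ℤ} :
    l ∈ airPocketSuffixes n h downOK ↔ IsAirPocketSuffix h downOK l ∧ l.length = n := by
  induction n generalizing h downOK l with
  | zero => cases l <;> simp [airPocketSuffixes, IsAirPocketSuffix.nil_iff, mem_ite]
  | succ n ih =>
    cases l with
    | nil => simp [airPocketSuffixes, mem_ite]
    | cons x l =>
      rw [IsAirPocketSuffix.cons_iff]
      simp only [airPocketSuffixes, mem_union, mem_image, ih, List.cons.injEq,
        exists_eq_right_right, mem_ite, mem_biUnion, mem_Icc, Bool.not_eq_true, notMem_empty,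
        imp_false, Bool.not_eq_false, List.length_cons, Nat.add_right_cancel_iff]
      grind

theorem card_airPocketSuffixes (n h : ℕ) (downOK : Bool) :
    #(airPocketSuffixes n h downOK) = airPocketCount n h downOK := by
  induction n generalizing h downOK with
  | zero => by_cases hh : h = 0 <;> simp [airPocketSuffixes, airPocketCount, hh]
  | succ n ih =>
    have hcons (x : ℤ) (s : Finset (List ℤ)) : #(s.image (List.cons x)) = #s :=
      card_image_of_injective _ List.cons_injective
    cases downOK
    · simp [airPocketSuffixes, airPocketCount, hcons, ih]
    · rw [airPocketSuffixes, airPocketCount, if_pos rfl, if_pos rfl, card_union_of_disjoint,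
        card_biUnion, hcons, ih]
      · simp only [hcons, ih]
      · intro k _ k' _ hkk'
        simp only [Function.onFun, disjoint_left, mem_image]
        rintro _ ⟨l, -, rfl⟩ ⟨l', -, hl'⟩
        simp only [List.cons.injEq, neg_inj, Nat.cast_inj] at hl'
        exact hkk' hl'.1.symm
      · simp only [disjoint_left, mem_image, mem_biUnion, mem_Icc]
        rintro _ ⟨l, -, rfl⟩ ⟨k, hk, l', -, hl'⟩
        simp only [List.cons.injEq] at hl'
        omega

theorem natCard_isDyckAirPocket_length_eq (n : ℕ) :
    Nat.card {l : List ℤ // IsDyckAirPocket l ∧ l.length = n} = airPocketCount n 0 true := by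
  rw [← card_airPocketSuffixes, ← Nat.card_eq_finsetCard]
  exact Nat.card_congr <| Equiv.subtypeEquivRight fun l => by
    rw [isDyckAirPocket_iff, mem_airPocketSuffixes]

/-- the numbers of Dyck paths with air pockets of length n = 0,…,11. -/
theorem stmt3 :
    Nat.card {l : List ℤ // IsDyckAirPocket l ∧ l.length = 0} = 1 ∧
    Nat.card {l : List ℤ // IsDyckAirPocket l ∧ l.length = 1} = 0 ∧
    Nat.card {l : List ℤ // IsDyckAirPocket l ∧ l.length = 2} = 1 ∧
    Nat.card {l : List ℤ // IsDyckAirPocket l ∧ l.length = 3} = 1 ∧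
    Nat.card {l : List ℤ // IsDyckAirPocket l ∧ l.length = 4} = 2 ∧
    Nat.card {l : List ℤ // IsDyckAirPocket l ∧ l.length = 5} = 4 ∧
    Nat.card {l : List ℤ // IsDyckAirPocket l ∧ l.length = 6} = 8 ∧
    Nat.card {l : List ℤ // IsDyckAirPocket l ∧ l.length = 7} = 17 ∧
    Nat.card {l : List ℤ // IsDyckAirPocket l ∧ l.length = 8} = 37 ∧
    Nat.card {l : List ℤ // IsDyckAirPocket l ∧ l.length = 9} = 82 ∧
    Nat.card {l : List ℤ // IsDyckAirPocket l ∧ l.length = 10} = 185 ∧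
    Nat.card {l : List ℤ // IsDyckAirPocket l ∧ l.length = 11} = 423 := by
  simp only [natCard_isDyckAirPocket_length_eq]
  decide
end

section
/- There is a bijection between Dyck paths with air pockets of length m ending at height 0 and ordinary Dyck paths (up-steps (1,1), down-steps (1,−1), never below the x-axis, ending on the x-axis) whose number of up-steps plus number of maximal runs of down-steps equals m: namely, compressing each maximal run of consecutive down-steps of an ordinary Dyck path into a single down-step (1,−k) of the same total drop k. -/
/-- Ordinary Dyck path: steps ±1, never below the x-axis, ending on it. -/
def IsDyck (l : List ℤ) : Prop :=
  (∀ x ∈ l, x = 1 ∨ x = -1) ∧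
  (∀ p : List ℤ, p <+: l → 0 ≤ p.sum) ∧
  l.sum = 0

/-- Compress each maximal run of consecutive negative steps into a single
step of the same total (negative) displacement. -/
def compress : List ℤ → List ℤ
  | [] => []
  | a :: l =>
    match compress l with
    | [] => [a]
    | b :: t => if a < 0 ∧ b < 0 then (a + b) :: t else a :: b :: t

/-!
Let `mergeCons a t` be `a :: t` with `a` merged into the first step of `t` when both go down;
`compress` is the right fold of `mergeCons`. Its inverse `expand` splits a down-step `-k` into
`k` unit down-steps. Since merging down-steps is associative, `expand ∘ compress = expand` and
`compress ∘ expand = compress` on all lists, while `expand` fixes `±1` paths and `compress` fixes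
paths without two adjacent down-steps. Both maps keep the total displacement, and every prefix of
the image is at least as high as some prefix of the original, so nonnegativity transfers both ways.
-/

def mergeCons (a : ℤ) : List ℤ → List ℤ
  | [] => [a]
  | b :: t => if a < 0 ∧ b < 0 then (a + b) :: t else a :: b :: t

lemma compress_cons (a : ℤ) (l : List ℤ) : compress (a :: l) = mergeCons a (compress l) := by
  rw [compress]; cases compress l <;> rfl

lemma compress_append (xs r : List ℤ) :
    compress (xs ++ r) = xs.foldr mergeCons (compress r) := by
  induction xs with
  | nil => rfl
  | cons a xs ih => rw [List.cons_append, compress_cons, ih, List.foldr_cons]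

lemma sum_mergeCons (a : ℤ) (t : List ℤ) : (mergeCons a t).sum = a + t.sum := by
  cases t with
  | nil => simp [mergeCons]
  | cons b t => simp only [mergeCons]; split_ifs <;> simp [add_assoc]

lemma sum_compress (l : List ℤ) : (compress l).sum = l.sum := by
  induction l with
  | nil => rfl
  | cons a l ih => rw [compress_cons, sum_mergeCons, ih, List.sum_cons]

lemma mem_mergeCons {a x : ℤ} {t : List ℤ} (hx : x ∈ mergeCons a t) :
    x = a ∨ x ∈ t ∨ x < 0 := by
  cases t with
  | nil => simp_all [mergeCons]
  | cons b t =>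
    simp only [mergeCons] at hx
    split_ifs at hx with h
    · rcases List.mem_cons.mp hx with rfl | hx
      · exact .inr (.inr (by omega))
      · simp [hx]
    · exact (List.mem_cons.mp hx).imp_right .inl

lemma mem_compress {l : List ℤ} {x : ℤ} (hx : x ∈ compress l) : x ∈ l ∨ x < 0 := by
  induction l with
  | nil => simp [compress] at hx
  | cons a l ih =>
    rw [compress_cons] at hx
    rcases mem_mergeCons hx with rfl | hx | hx
    · simp
    · exact (ih hx).imp_left (List.mem_cons_of_mem a)
    · exact .inr hx

lemma isChain_mergeCons (a : ℤ) {t : List ℤ} (ht : t.IsChain fun a b => a < 0 → 0 ≤ b) :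
    (mergeCons a t).IsChain fun a b => a < 0 → 0 ≤ b := by
  cases t with
  | nil => exact List.isChain_singleton a
  | cons b t =>
    simp only [mergeCons]
    split_ifs with h
    · cases t with
      | nil => exact List.isChain_singleton _
      | cons c t =>
        rw [List.isChain_cons_cons] at ht ⊢
        exact ⟨fun _ => ht.1 h.2, ht.2⟩
    · exact List.isChain_cons_cons.mpr ⟨by omega, ht⟩

lemma isChain_compress (l : List ℤ) :
    (compress l).IsChain fun a b => a < 0 → 0 ≤ b := by
  induction l with
  | nil => exact List.IsChain.nil
  | cons a l ih => rw [compress_cons]; exact isChain_mergeCons a ih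

lemma compress_eq_self {l : List ℤ} (h : l.IsChain fun a b => a < 0 → 0 ≤ b) :
    compress l = l := by
  induction l with
  | nil => rfl
  | cons a l ih =>
    rw [compress_cons, ih h.tail]
    cases l with
    | nil => rfl
    | cons b t =>
      have hab := (List.isChain_cons_cons.mp h).1
      exact if_neg (by omega)

lemma mergeCons_mergeCons {a b : ℤ} (ha : a < 0) (hb : b < 0) (t : List ℤ) :
    mergeCons a (mergeCons b t) = mergeCons (a + b) t := by
  cases t with
  | nil => simp [mergeCons, ha, hb]
  | cons c t =>
    by_cases hc : c < 0
    · simp [mergeCons, ha, hb, hc, add_assoc, add_neg ha hb, add_neg hb hc]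
    · simp [mergeCons, ha, hb, hc, add_neg ha hb]

lemma foldr_mergeCons_replicate {n : ℕ} (hn : 1 ≤ n) (t : List ℤ) :
    (List.replicate n (-1)).foldr mergeCons t = mergeCons (-n) t := by
  induction n, hn using Nat.le_induction with
  | base => rfl
  | succ n hn ih =>
    rw [List.replicate_succ, List.foldr_cons, ih, mergeCons_mergeCons (by norm_num) (by omega)]
    congr 1
    push_cast
    ring

def unitSteps (a : ℤ) : List ℤ :=
  if a < 0 then List.replicate (-a).toNat (-1) else [a]

def expand (l : List ℤ) : List ℤ :=
  l.flatMap unitSteps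

lemma expand_cons (a : ℤ) (l : List ℤ) : expand (a :: l) = unitSteps a ++ expand l :=
  List.flatMap_cons

lemma sum_unitSteps (a : ℤ) : (unitSteps a).sum = a := by
  unfold unitSteps
  split_ifs with ha
  · simp only [List.sum_replicate, smul_neg, nsmul_eq_mul, mul_one]
    omega
  · simp

lemma sum_expand (l : List ℤ) : (expand l).sum = l.sum := by
  induction l with
  | nil => rfl
  | cons a l ih => rw [expand_cons, List.sum_append, sum_unitSteps, ih, List.sum_cons]

lemma unitSteps_add {a b : ℤ} (ha : a < 0) (hb : b < 0) :
    unitSteps (a + b) = unitSteps a ++ unitSteps b := by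
  simp only [unitSteps, if_pos ha, if_pos hb, if_pos (add_neg ha hb),
    List.replicate_append_replicate]
  congr 1
  omega

lemma foldr_mergeCons_unitSteps (a : ℤ) (t : List ℤ) :
    (unitSteps a).foldr mergeCons t = mergeCons a t := by
  unfold unitSteps
  split_ifs with ha
  · rw [foldr_mergeCons_replicate (by omega), Int.toNat_of_nonneg (by omega), neg_neg]
  · rfl

lemma compress_expand (l : List ℤ) : compress (expand l) = compress l := by
  induction l with
  | nil => rfl
  | cons a l ih =>
    rw [expand_cons, compress_append, ih, foldr_mergeCons_unitSteps, compress_cons]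

lemma expand_mergeCons (a : ℤ) (t : List ℤ) :
    expand (mergeCons a t) = unitSteps a ++ expand t := by
  cases t with
  | nil => simp [mergeCons, expand]
  | cons b t =>
    simp only [mergeCons]
    split_ifs with h
    · rw [expand_cons, expand_cons, unitSteps_add h.1 h.2, List.append_assoc]
    · rfl

lemma expand_compress (l : List ℤ) : expand (compress l) = expand l := by
  induction l with
  | nil => rfl
  | cons a l ih => rw [compress_cons, expand_mergeCons, ih, expand_cons]

lemma expand_eq_self {l : List ℤ} (h : ∀ x ∈ l, x < 0 → x = -1) : expand l = l := by
  induction l with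
  | nil => rfl
  | cons a l ih =>
    rw [expand_cons, ih fun x hx => h x (List.mem_cons_of_mem a hx)]
    unfold unitSteps
    split_ifs with ha
    · rw [h a List.mem_cons_self ha]
      rfl
    · rfl

lemma mem_expand {l : List ℤ} {x : ℤ} (hx : x ∈ expand l) : x = -1 ∨ 0 ≤ x ∧ x ∈ l := by
  obtain ⟨a, ha, hx⟩ := List.mem_flatMap.mp hx
  unfold unitSteps at hx
  split_ifs at hx with hneg
  · exact .inl (List.eq_of_mem_replicate hx)
  · rw [List.mem_singleton.mp hx]
    exact .inr ⟨by omega, ha⟩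

lemma List.IsPrefix.prefix_or_eq_append {α : Type*} {p x y : List α} (h : p <+: x ++ y) :
    p <+: x ∨ ∃ r, r <+: y ∧ p = x ++ r := by
  obtain ⟨s, hs⟩ := h
  rcases List.append_eq_append_iff.mp hs with ⟨c, rfl, -⟩ | ⟨c, rfl, rfl⟩
  · exact .inl (List.prefix_append p c)
  · exact .inr ⟨c, List.prefix_append c s, rfl⟩

lemma prefix_mergeCons {a : ℤ} {p t : List ℤ} (hp : p <+: mergeCons a t) :
    p = [] ∨ ∃ q, q <+: t ∧ p.sum = a + q.sum := by
  cases t with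
  | nil =>
    refine (List.prefix_cons_iff.mp hp).imp_right ?_
    rintro ⟨s, rfl, hs⟩
    exact ⟨[], List.nil_prefix, by simp [List.prefix_nil.mp hs]⟩
  | cons b t =>
    simp only [mergeCons] at hp
    split_ifs at hp
    · refine (List.prefix_cons_iff.mp hp).imp_right ?_
      rintro ⟨s, rfl, hs⟩
      exact ⟨b :: s, (List.prefix_cons_inj b).mpr hs, by simp [add_assoc]⟩
    · refine (List.prefix_cons_iff.mp hp).imp_right ?_
      rintro ⟨s, rfl, hs⟩
      exact ⟨s, hs, List.sum_cons⟩

lemma exists_prefix_sum_eq_of_prefix_compress {l p : List ℤ} (hp : p <+: compress l) :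
    ∃ q, q <+: l ∧ q.sum = p.sum := by
  induction l generalizing p with
  | nil => exact ⟨[], List.nil_prefix, by rw [List.prefix_nil.mp hp]⟩
  | cons a l ih =>
    rw [compress_cons] at hp
    rcases prefix_mergeCons hp with rfl | ⟨q, hq, hsum⟩
    · exact ⟨[], List.nil_prefix, rfl⟩
    · obtain ⟨r, hr, hrq⟩ := ih hq
      exact ⟨a :: r, (List.prefix_cons_inj a).mpr hr, by rw [List.sum_cons, hrq, hsum]⟩

lemma min_le_sum_of_prefix_unitSteps {a : ℤ} {p : List ℤ} (hp : p <+: unitSteps a) :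
    min a 0 ≤ p.sum := by
  unfold unitSteps at hp
  split_ifs at hp with ha
  · obtain ⟨hlen, hrep⟩ := List.prefix_replicate_iff.mp hp
    rw [hrep, List.sum_replicate]
    simp only [smul_neg, nsmul_eq_mul, mul_one]
    omega
  · rcases List.prefix_cons_iff.mp hp with rfl | ⟨s, rfl, hs⟩
    · simp
    · simp [List.prefix_nil.mp hs]

lemma exists_prefix_sum_le_of_prefix_expand {l p : List ℤ} (hp : p <+: expand l) :
    ∃ q, q <+: l ∧ q.sum ≤ p.sum := by
  induction l generalizing p with
  | nil => exact ⟨[], List.nil_prefix, by rw [List.prefix_nil.mp hp]⟩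
  | cons a l ih =>
    rw [expand_cons] at hp
    rcases hp.prefix_or_eq_append with hp | ⟨r, hr, rfl⟩
    · have hmin := min_le_sum_of_prefix_unitSteps hp
      rcases min_choice a 0 with h | h
      · exact ⟨[a], (List.prefix_cons_inj a).mpr List.nil_prefix, by simpa [h] using hmin⟩
      · exact ⟨[], List.nil_prefix, by simpa [h] using hmin⟩
    · obtain ⟨q, hq, hqr⟩ := ih hr
      refine ⟨a :: q, (List.prefix_cons_inj a).mpr hq, ?_⟩
      rw [List.sum_cons, List.sum_append, sum_unitSteps]
      omega

lemma IsDyck.isDyckAirPocket_compress {l : List ℤ} (hl : IsDyck l) :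
    IsDyckAirPocket (compress l) := by
  obtain ⟨hsteps, hprefix, hsum⟩ := hl
  have hup {x : ℤ} (hx : x ∈ compress l) (hnonneg : 0 ≤ x) : x = 1 := by
    rcases mem_compress hx with hx | hx
    · have := hsteps x hx
      omega
    · omega
  refine ⟨fun x hx => ?_, ?_, fun p hp => ?_, (sum_compress l).trans hsum⟩
  · by_cases hx' : 0 ≤ x
    · exact .inl (hup hx hx')
    · exact .inr (by omega)
  · exact (isChain_compress l).imp_of_mem_imp fun a b _ hb hab ha => hup hb (hab (by omega))
  · obtain ⟨q, hq, hqp⟩ := exists_prefix_sum_eq_of_prefix_compress hp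
    exact hqp ▸ hprefix q hq

lemma IsDyck.expand_eq {l : List ℤ} (hl : IsDyck l) : expand l = l :=
  expand_eq_self fun x hx hneg => (hl.1 x hx).resolve_left (by omega)

lemma IsDyckAirPocket.isDyck_expand {l : List ℤ} (hl : IsDyckAirPocket l) :
    IsDyck (expand l) := by
  obtain ⟨hsteps, -, hprefix, hsum⟩ := hl
  refine ⟨fun x hx => ?_, fun p hp => ?_, ?_⟩
  · rcases mem_expand hx with hx | ⟨hnonneg, hx⟩
    · exact .inr hx
    · have := hsteps x hx
      omega
  · obtain ⟨q, hq, hqp⟩ := exists_prefix_sum_le_of_prefix_expand hp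
    exact (hprefix q hq).trans hqp
  · rw [sum_expand, hsum]

lemma IsDyckAirPocket.compress_expand_eq {l : List ℤ} (hl : IsDyckAirPocket l) :
    compress (expand l) = l := by
  rw [compress_expand, compress_eq_self]
  exact List.IsChain.imp (fun a b hab ha => by have := hab (by omega); omega) hl.2.1

/-- For a `±1` Dyck path, the number of up-steps plus the number of maximal down-runs is the
length of its compression. -/
theorem stmt4 (m : ℕ) :
    Set.BijOn compress
      {l : List ℤ | IsDyck l ∧ (compress l).length = m}
      {l : List ℤ | IsDyckAirPocket l ∧ l.length = m} := by
  refine ⟨fun l hl => ⟨hl.1.isDyckAirPocket_compress, hl.2⟩, fun x hx y hy hxy => ?_,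
    fun l hl => ?_⟩
  · rw [← hx.1.expand_eq, ← hy.1.expand_eq, ← expand_compress, hxy, expand_compress]
  · have hround := hl.1.compress_expand_eq
    exact ⟨expand l, ⟨hl.1.isDyck_expand, by rw [hround]; exact hl.2⟩, hround⟩
end

section
/- Let F(z) = ∑_n c_n z^n where c_n is the number of Dyck paths with air pockets of length n (ending at height 0, i.e. f₀ + g₀ in the paper's notation). Then for 0 < z < 1/4, F(z) = s₂(z), where s₂(z) = (1 + z − z² − √(z⁴ − 2z³ − z² − 2z + 1))/(2z). -/
namespace DAP
open List Mathlib

abbrev Rel : ℤ → ℤ → Prop := fun a b => a ≤ -1 → b = 1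

lemma prefix_sums_iff (l : List ℤ) :
    (∀ p : List ℤ, p <+: l → 0 ≤ p.sum) ↔ ∀ i, 0 ≤ (l.take i).sum := by
  constructor
  · intro h i; exact h _ (take_prefix i l)
  · intro h p hp
    rw [List.prefix_iff_eq_take.mp hp]; exact h _

lemma take_sum_append (A B : List ℤ) (i : ℕ) :
    ((A ++ B).take i).sum = (A.take i).sum + (B.take (i - A.length)).sum := by
  rw [List.take_append, List.sum_append]

lemma take_of_ge {A : List ℤ} {i : ℕ} (h : A.length ≤ i) : A.take i = A :=
  List.take_of_length_le h

/-- destructure a nonempty DAP -/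
lemma dap_destruct {R : List ℤ} (hR : IsDyckAirPocket R) (hne : R ≠ []) :
    ∃ α d, R = α ++ [d] ∧ d ≤ -1 ∧ α ≠ [] ∧ α.sum = -d ∧ α.getLast? = some 1 ∧
      (∀ x ∈ α, x = 1 ∨ x ≤ -1) ∧ α.Chain' Rel ∧ (∀ i, 0 ≤ (α.take i).sum) := by
  obtain ⟨h1, h2, h3, h4⟩ := hR
  rcases R.eq_nil_or_concat' with rfl | ⟨α, d, rfl⟩
  · exact absurd rfl hne
  have hαpre : α <+: α ++ [d] := ⟨[d], rfl⟩
  have hαsum0 : 0 ≤ α.sum := h3 α hαpre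
  have hsum : α.sum + d = 0 := by simpa using h4
  have hd : d ≤ -1 := by
    rcases h1 d (by simp) with hd1 | hd1
    · omega
    · exact hd1
  have hαne : α ≠ [] := by
    rintro rfl; simp at hsum; omega
  have hαlast : α.getLast? = some 1 := by
    rcases α.eq_nil_or_concat' with rfl | ⟨γ, a, rfl⟩
    · exact absurd rfl hαne
    rw [List.getLast?_concat]
    have hchain : Rel a d := by
      have := (List.isChain_append (l₁ := γ ++ [a]) (l₂ := [d])).mp h2
      exact this.2.2 a (by rw [List.getLast?_concat]; rfl) d rfl
    have ha : a = 1 ∨ a ≤ -1 := h1 a (by simp)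
    by_contra hne1
    have : a ≤ -1 := by tauto
    have := hchain this
    omega
  refine ⟨α, d, rfl, hd, hαne, by omega, hαlast, ?_, ?_, ?_⟩
  · intro x hx; exact h1 x (by simp [hx])
  · exact h2.prefix hαpre
  · intro i
    exact h3 _ ((take_prefix i α).trans hαpre)

/-- build `α ++ [e]` DAP -/
lemma build_concat {α : List ℤ} {e : ℤ}
    (hαe : ∀ x ∈ α, x = 1 ∨ x ≤ -1) (hαc : α.Chain' Rel)
    (hαt : ∀ i, 0 ≤ (α.take i).sum) (hαl : α.getLast? = some 1)
    (he : e ≤ -1) (hsum : α.sum = -e) : IsDyckAirPocket (α ++ [e]) := by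
  refine ⟨?_, ?_, ?_, by simp [hsum]⟩
  · intro x hx
    rcases List.mem_append.mp hx with hx | hx
    · exact hαe x hx
    · right; simp at hx; omega
  · rw [List.Chain', List.isChain_append]
    refine ⟨hαc, by simp, ?_⟩
    intro x hx y hy
    rw [hαl] at hx
    simp at hx hy
    subst hx
    intro h; omega
  · rw [prefix_sums_iff]
    intro i
    rw [take_sum_append]
    rcases le_or_gt i α.length with h | h
    · rw [Nat.sub_eq_zero_of_le h]; simpa using hαt i
    · rw [take_of_ge h.le, take_of_ge (by simp; omega)]
      simp [hsum]

/-- build the composite path for the inr case -/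
lemma build_main {Q α : List ℤ} {e : ℤ} (hQ : IsDyckAirPocket Q)
    (hαe : ∀ x ∈ α, x = 1 ∨ x ≤ -1) (hαc : α.Chain' Rel)
    (hαt : ∀ i, 0 ≤ (α.take i).sum) (hαl : α.getLast? = some 1)
    (he : e ≤ -1) (hsum : α.sum = -e) :
    IsDyckAirPocket (Q ++ 1 :: (α ++ [e - 1])) := by
  obtain ⟨hQ1, hQ2, hQ3, hQ4⟩ := hQ
  refine ⟨?_, ?_, ?_, ?_⟩
  · intro x hx
    rcases List.mem_append.mp hx with hx | hx
    · exact hQ1 x hx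
    · simp at hx
      rcases hx with rfl | hx | rfl
      · left; rfl
      · exact hαe x hx
      · right; omega
  · rw [List.Chain', List.isChain_append]
    refine ⟨hQ2, ?_, ?_⟩
    · rw [List.isChain_cons]
      constructor
      · intro y _
        intro h; omega
      · rw [List.isChain_append]
        refine ⟨hαc, by simp, ?_⟩
        intro x hx y hy
        rw [hαl] at hx
        simp at hx hy
        subst hx
        intro h; omega
    · intro x _ y hy
      simp at hy
      subst hy
      intro _; rfl
  · rw [prefix_sums_iff]
    intro i
    rw [take_sum_append]
    have hQt : ∀ j, 0 ≤ (Q.take j).sum := (prefix_sums_iff Q).mp hQ3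
    rcases le_or_gt i Q.length with h | h
    · rw [Nat.sub_eq_zero_of_le h]; simpa using hQt i
    · rw [take_of_ge h.le, hQ4]
      obtain ⟨m', hm'⟩ : ∃ m', i - Q.length = m' + 1 := ⟨i - Q.length - 1, by omega⟩
      rw [hm', List.take_succ_cons, List.sum_cons, take_sum_append]
      rcases le_or_gt m' α.length with h2 | h2
      · rw [Nat.sub_eq_zero_of_le h2]
        have := hαt m'
        simp
        omega
      · rw [take_of_ge h2.le, take_of_ge (by simp; omega), hsum]
        simp
        omega
  · simp [hQ4, hsum]
    ring

def unary (l : List ℤ) : List Bool :=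
  l.flatMap fun x => if x = 1 then [] else List.replicate x.natAbs true ++ [false]

@[simp] lemma unary_nil : unary [] = [] := rfl

lemma unary_cons (x : ℤ) (t : List ℤ) :
    unary (x :: t) = (if x = 1 then [] else List.replicate x.natAbs true ++ [false]) ++ unary t := by
  simp [unary]

lemma unary_length {l : List ℤ} (h : ∀ x ∈ l, x = 1 ∨ x ≤ -1) :
    ((unary l).length : ℤ) = l.length - l.sum := by
  induction l with
  | nil => simp
  | cons x t ih =>
    have hx := h x (by simp)
    have ht := ih (fun y hy => h y (by simp [hy]))
    rcases eq_or_ne x 1 with rfl | hne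
    · simp [unary_cons, ht]; ring
    · have hxle : x ≤ -1 := hx.resolve_left hne
      have h1 : (unary (x :: t)).length = x.natAbs + 1 + (unary t).length := by
        rw [unary_cons, if_neg hne]
        simp
        omega
      rw [h1]
      simp only [List.length_cons, List.sum_cons]
      omega

lemma replicate_true_eq {m k : ℕ} {u v : List Bool}
    (h : List.replicate m true ++ false :: u = List.replicate k true ++ false :: v) :
    m = k ∧ u = v := by
  induction m generalizing k with
  | zero =>
    cases k with
    | zero => simpa using h
    | succ k => simp [List.replicate_succ] at h
  | succ m ih =>
    cases k with
    | zero => simp [List.replicate_succ] at h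
    | succ k =>
      simp only [List.replicate_succ, List.cons_append, List.cons.injEq, true_and] at h
      obtain ⟨h1, h2⟩ := ih h
      exact ⟨by omega, h2⟩

lemma enc_inj : ∀ {l l' : List ℤ}, (∀ x ∈ l, x = 1 ∨ x ≤ -1) → (∀ x ∈ l', x = 1 ∨ x ≤ -1) →
    l.map (fun x => decide (x = 1)) = l'.map (fun x => decide (x = 1)) →
    unary l = unary l' → l = l' := by
  intro l
  induction l with
  | nil => intro l' _ _ hm _; simpa using (List.map_eq_nil_iff.mp hm.symm)
  | cons x t ih =>
    intro l' hl hl' hm hu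
    cases l' with
    | nil => simp at hm
    | cons y t' =>
      simp only [List.map_cons, List.cons.injEq] at hm
      obtain ⟨hxy, hm⟩ := hm
      rcases eq_or_ne x 1 with rfl | hx1
      · have hy : y = 1 := by simpa using hxy.symm
        subst hy
        rw [unary_cons, unary_cons] at hu
        simp at hu
        exact congrArg (List.cons 1) (ih (fun a ha => hl a (by simp [ha])) (fun a ha => hl' a (by simp [ha])) hm hu)
      · have hy1 : y ≠ 1 := by
          intro hy; rw [hy] at hxy; simp [hx1] at hxy
        rw [unary_cons, unary_cons, if_neg hx1, if_neg hy1] at hu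
        simp only [List.append_assoc, List.singleton_append] at hu
        obtain ⟨habs, hrest⟩ := replicate_true_eq hu
        have hx := (hl x (by simp)).resolve_left hx1
        have hy := (hl' y (by simp)).resolve_left hy1
        have : x = y := by omega
        subst this
        rw [ih (fun a ha => hl a (by simp [ha])) (fun a ha => hl' a (by simp [ha])) hm hrest]


abbrev Dt (n : ℕ) := {l : List ℤ // IsDyckAirPocket l ∧ l.length = n}

noncomputable def enc (n : ℕ) (l : Dt n) : List.Vector Bool n × List.Vector Bool n :=
  (⟨l.1.map (fun x => decide (x = 1)), by rw [List.length_map]; exact l.2.2⟩,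
   ⟨unary l.1, by
      have := unary_length l.2.1.1
      have h4 := l.2.1.2.2.2
      have h5 := l.2.2
      omega⟩)

lemma enc_injective (n : ℕ) : Function.Injective (enc n) := by
  intro a b hab
  obtain ⟨h1, h2⟩ := Prod.mk.injEq .. ▸ hab
  apply Subtype.ext
  exact enc_inj a.2.1.1 b.2.1.1 (congrArg Subtype.val h1) (congrArg Subtype.val h2)

instance Dt_finite (n : ℕ) : Finite (Dt n) :=
  Finite.of_injective _ (enc_injective n)

lemma card_le (n : ℕ) : Nat.card (Dt n) ≤ 4 ^ n := by
  have h := Nat.card_le_card_of_injective _ (enc_injective n)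
  have : Nat.card (List.Vector Bool n × List.Vector Bool n) = 4 ^ n := by
    rw [Nat.card_eq_fintype_card]
    simp [card_vector]
    rw [← mul_pow]
    norm_num
  omega


end DAP

namespace Part2
open DAP List

lemma build_inl {Q : List ℤ} (hQ : IsDyckAirPocket Q) : IsDyckAirPocket (Q ++ [1, -1]) := by
  obtain ⟨hQ1, hQ2, hQ3, hQ4⟩ := hQ
  refine ⟨?_, ?_, ?_, by simp [hQ4]⟩
  · intro x hx
    rcases List.mem_append.mp hx with hx | hx
    · exact hQ1 x hx
    · simp at hx; rcases hx with rfl | rfl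
      · left; rfl
      · right; omega
  · rw [List.Chain', List.isChain_append]
    refine ⟨hQ2, ?_, ?_⟩
    · refine List.isChain_cons_cons.mpr ⟨?_, by simp⟩
      intro h; omega
    · intro x _ y hy
      simp at hy; subst hy; intro _; rfl
  · rw [prefix_sums_iff]
    intro i
    rw [take_sum_append]
    have hQt : ∀ j, 0 ≤ (Q.take j).sum := (prefix_sums_iff Q).mp hQ3
    have h2 : 0 ≤ ([1, -1].take (i - Q.length) : List ℤ).sum := by
      rcases (i - Q.length) with _ | _ | m <;> simp
    have := hQt i
    omega

/-- the splitting of a positive-ending path -/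
lemma take_succ_sum (β : List ℤ) (t : ℕ) (h : t < β.length) :
    (β.take (t + 1)).sum = (β.take t).sum + β[t] := by
  rw [← List.take_concat_get h, List.concat_eq_append, List.sum_append, List.sum_singleton]

lemma split_pos {β : List ℤ} (helem : ∀ x ∈ β, x = 1 ∨ x ≤ -1)
    (hchain : β.Chain' Rel)
    (hpre : ∀ i, 0 ≤ (β.take i).sum) (hsum : 1 ≤ β.sum) :
    ∃ Q α, β = Q ++ 1 :: α ∧ IsDyckAirPocket Q ∧
      (∀ i, 0 ≤ (α.take i).sum) ∧ α.sum = β.sum - 1 := by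
  classical
  set t := Nat.findGreatest (fun i => (β.take i).sum = 0) β.length with hts
  have ht0 : (β.take t).sum = 0 :=
    Nat.findGreatest_spec (P := fun i => (β.take i).sum = 0) (Nat.zero_le _) (by simp)
  have htmax : ∀ i, t < i → i ≤ β.length → (β.take i).sum ≠ 0 := by
    intro i h1 h2
    exact Nat.findGreatest_is_greatest h1 h2
  have htle : t ≤ β.length := Nat.findGreatest_le β.length
  have htlt : t < β.length := by
    rcases eq_or_lt_of_le htle with heq | h
    · exfalso; rw [heq, take_of_ge le_rfl] at ht0; omega
    · exact h
  have hkey : ∀ i, t < i → 1 ≤ (β.take i).sum := by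
    intro i hi
    rcases le_or_gt i β.length with h | h
    · have := htmax i hi h
      have := hpre i
      omega
    · rw [take_of_ge h.le]
      exact hsum
  have hsucc := take_succ_sum β t htlt
  have hget : β[t] = 1 := by
    have h2 := hkey (t + 1) (by omega)
    have h3 : β[t] = 1 ∨ β[t] ≤ -1 := helem _ (List.getElem_mem htlt)
    omega
  have h2 : (β.take (t + 1)).sum = 1 := by omega
  refine ⟨β.take t, β.drop (t + 1), ?_, ?_, ?_, ?_⟩
  · conv_lhs => rw [← List.take_append_drop t β]
    rw [List.drop_eq_getElem_cons htlt, hget]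
  · refine ⟨fun x hx => helem x (List.mem_of_mem_take hx), ?_, ?_, ht0⟩
    · exact hchain.prefix (take_prefix t β)
    · rw [prefix_sums_iff]
      intro i
      rw [List.take_take]
      exact hpre _
  · intro i
    have h1 : β.take (t + 1 + i) = β.take (t + 1) ++ (β.drop (t + 1)).take i := by
      rw [← List.take_add]
    have h3 := hkey (t + 1 + i) (by omega)
    have h4 : (β.take (t + 1 + i)).sum = 1 + ((β.drop (t + 1)).take i).sum := by
      rw [h1, List.sum_append, h2]
    omega
  · have h1 : β = β.take (t + 1) ++ β.drop (t + 1) := (List.take_append_drop _ β).symm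
    have := congrArg List.sum h1
    rw [List.sum_append, h2] at this
    omega

end Part2

namespace Part3
open DAP Part2 List

lemma split_lt_absurd {Q T Q' T' : List ℤ} (hQ' : Q'.sum = 0)
    (hT : ∀ i < T.length, 0 ≤ (T.take i).sum) (hQsum : Q.sum = 0)
    (hT'ne : T' ≠ [])
    (h : Q ++ 1 :: T = Q' ++ 1 :: T') (hlt : Q.length < Q'.length) : False := by
  have hlen : Q.length + 1 + T.length = Q'.length + 1 + T'.length := by
    have := congrArg List.length h
    simp at this
    omega
  have hT'len : 1 ≤ T'.length := by
    cases T' with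
    | nil => exact absurd rfl hT'ne
    | cons a t => simp
  have hQ'take : Q' = (Q ++ 1 :: T).take Q'.length := by
    rw [h, List.take_append, Nat.sub_self, List.take_length,
      List.take_zero, List.append_nil]
  have hsum : Q'.sum = (Q.take Q'.length).sum + ((1 :: T).take (Q'.length - Q.length)).sum := by
    conv_lhs => rw [hQ'take, take_sum_append]
  obtain ⟨m, hm⟩ : ∃ m, Q'.length - Q.length = m + 1 := ⟨Q'.length - Q.length - 1, by omega⟩
  rw [hm, List.take_succ_cons, List.sum_cons, take_of_ge hlt.le, hQsum] at hsum
  have hmlt : m < T.length := by omega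
  have := hT m hmlt
  omega

lemma split_unique {Q T Q' T' : List ℤ} (hQ : Q.sum = 0) (hQ' : Q'.sum = 0)
    (hT : ∀ i < T.length, 0 ≤ (T.take i).sum) (hT' : ∀ i < T'.length, 0 ≤ (T'.take i).sum)
    (hTne : T ≠ []) (hT'ne : T' ≠ [])
    (h : Q ++ 1 :: T = Q' ++ 1 :: T') : Q = Q' ∧ T = T' := by
  have hlen : Q.length = Q'.length := by
    rcases lt_trichotomy Q.length Q'.length with hlt | heq | hgt
    · exact absurd (split_lt_absurd hQ' hT hQ hT'ne h hlt) (not_false)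
    · exact heq
    · exact absurd (split_lt_absurd hQ hT' hQ' hTne h.symm hgt) (not_false)
  obtain ⟨h1, h2⟩ := List.append_inj h hlen
  exact ⟨h1, by simpa using h2⟩

end Part3


namespace Part4
open DAP Part2 Part3 List

lemma Dt_ne_nil {m : ℕ} (R : Dt (m + 1)) : R.1 ≠ [] := by
  intro h
  have := R.2.2
  rw [h] at this
  simp at this

noncomputable def psi (n : ℕ)
    (s : Dt n ⊕ Σ j : Fin (n+1), Dt (n - j.1) × Dt (j.1+1)) : Dt (n+2) :=
  match s with
  | Sum.inl Q => ⟨Q.1 ++ [1, -1], by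
      refine ⟨build_inl Q.2.1, ?_⟩
      have := Q.2.2
      simp [this]⟩
  | Sum.inr ⟨j, Q, R⟩ => ⟨Q.1 ++ 1 :: (R.1.dropLast ++ [R.1.getLastD 0 - 1]), by
      obtain ⟨α, d, hR, hd, hαne, hαsum, hαl, hαe, hαc, hαt⟩ :=
        dap_destruct R.2.1 (Dt_ne_nil R)
      have hlQ := Q.2.2
      have hlR := R.2.2
      have hj : (j : ℕ) ≤ n := by omega
      constructor
      · rw [hR, List.dropLast_concat, List.getLastD_concat]
        exact build_main Q.2.1 hαe hαc hαt hαl hd hαsum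
      · rw [hR] at hlR
        simp at hlR
        rw [hR, List.dropLast_concat, List.getLastD_concat]
        simp [hlQ]
        omega⟩

@[simp] lemma psi_inl_val (n : ℕ) (Q : Dt n) :
    (psi n (Sum.inl Q)).1 = Q.1 ++ [1, -1] := rfl

@[simp] lemma psi_inr_val (n : ℕ) (j : Fin (n+1)) (Q : Dt (n - j.1)) (R : Dt (j.1+1)) :
    (psi n (Sum.inr ⟨j, Q, R⟩)).1 = Q.1 ++ 1 :: (R.1.dropLast ++ [R.1.getLastD 0 - 1]) := rfl

lemma T_take_nonneg {α : List ℤ} {e : ℤ} (hαt : ∀ i, 0 ≤ (α.take i).sum) :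
    ∀ i < (α ++ [e]).length, 0 ≤ ((α ++ [e]).take i).sum := by
  intro i hi
  simp at hi
  rw [take_sum_append, Nat.sub_eq_zero_of_le (by omega)]
  simpa using hαt i

lemma psi_inj (n : ℕ) : Function.Injective (psi n) := by
  rintro (Q | ⟨j, Q, R⟩) (Q' | ⟨j', Q', R'⟩) h
  · have hv := congrArg Subtype.val h
    simp only [psi_inl_val] at hv
    exact congrArg Sum.inl (Subtype.ext (List.append_cancel_right hv))
  · -- inl vs inr : impossible
    exfalso
    have hv := congrArg Subtype.val h
    simp only [psi_inl_val, psi_inr_val] at hv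
    obtain ⟨α, d, hR, hd, hαne, hαsum, hαl, hαe, hαc, hαt⟩ :=
      dap_destruct R'.2.1 (Dt_ne_nil R')
    rw [hR, List.dropLast_concat, List.getLastD_concat] at hv
    have h1 : (Q.1 ++ [1, -1]).getLast? = some (-1) := by
      have : Q.1 ++ [1, -1] = (Q.1 ++ [1]) ++ [-1] := by simp
      rw [this, List.getLast?_concat]
    have h2 : (Q'.1 ++ 1 :: (α ++ [d - 1])).getLast? = some (d - 1) := by
      have : Q'.1 ++ 1 :: (α ++ [d - 1]) = (Q'.1 ++ 1 :: α) ++ [d - 1] := by simp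
      rw [this, List.getLast?_concat]
    rw [hv, h2] at h1
    simp at h1
    omega
  · -- inr vs inl : impossible
    exfalso
    have hv := congrArg Subtype.val h
    simp only [psi_inl_val, psi_inr_val] at hv
    obtain ⟨α, d, hR, hd, hαne, hαsum, hαl, hαe, hαc, hαt⟩ :=
      dap_destruct R.2.1 (Dt_ne_nil R)
    rw [hR, List.dropLast_concat, List.getLastD_concat] at hv
    have h1 : (Q'.1 ++ [1, -1]).getLast? = some (-1) := by
      have : Q'.1 ++ [1, -1] = (Q'.1 ++ [1]) ++ [-1] := by simp
      rw [this, List.getLast?_concat]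
    have h2 : (Q.1 ++ 1 :: (α ++ [d - 1])).getLast? = some (d - 1) := by
      have : Q.1 ++ 1 :: (α ++ [d - 1]) = (Q.1 ++ 1 :: α) ++ [d - 1] := by simp
      rw [this, List.getLast?_concat]
    rw [← hv, h2] at h1
    simp at h1
    omega
  · have hv := congrArg Subtype.val h
    simp only [psi_inr_val] at hv
    obtain ⟨α, d, hR, hd, hαne, hαsum, hαl, hαe, hαc, hαt⟩ :=
      dap_destruct R.2.1 (Dt_ne_nil R)
    obtain ⟨α', d', hR', hd', hαne', hαsum', hαl', hαe', hαc', hαt'⟩ :=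
      dap_destruct R'.2.1 (Dt_ne_nil R')
    rw [hR, List.dropLast_concat, List.getLastD_concat] at hv
    rw [hR', List.dropLast_concat, List.getLastD_concat] at hv
    obtain ⟨hQeq, hTeq⟩ := split_unique Q.2.1.2.2.2 Q'.2.1.2.2.2
      (T_take_nonneg hαt) (T_take_nonneg hαt') (by simp) (by simp) hv
    have hαeq : α = α' := by
      have := congrArg List.dropLast hTeq
      rwa [List.dropLast_concat, List.dropLast_concat] at this
    have hdeq : d = d' := by
      have := congrArg (fun l => List.getLastD l 0) hTeq
      simp only [List.getLastD_concat] at this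
      omega
    have hReq : R.1 = R'.1 := by rw [hR, hR', hαeq, hdeq]
    have hjeq : j = j' := by
      apply Fin.ext
      have h1 := R.2.2
      have h2 := R'.2.2
      rw [hReq] at h1
      omega
    subst hjeq
    have hQ : Q = Q' := Subtype.ext hQeq
    have hRR : R = R' := Subtype.ext hReq
    rw [hQ, hRR]

lemma psi_surj (n : ℕ) : Function.Surjective (psi n) := by
  rintro ⟨P, hP, hPlen⟩
  have hPne : P ≠ [] := by intro h; rw [h] at hPlen; simp at hPlen
  obtain ⟨β, d, rfl, hd, hβne, hβsum, hβl, hβe, hβc, hβt⟩ := dap_destruct hP hPne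
  have hβlen : β.length = n + 1 := by
    rw [List.length_append] at hPlen
    simpa using hPlen
  rcases eq_or_lt_of_le hd with hd1 | hd2
  · -- d = -1, use inl
    obtain ⟨γ, a, rfl⟩ : ∃ γ a, β = γ ++ [a] := by
      rcases β.eq_nil_or_concat' with rfl | ⟨γ, a, h⟩
      · exact absurd rfl hβne
      · exact ⟨γ, a, h⟩
    have ha : a = 1 := by
      rw [List.getLast?_concat] at hβl
      simpa using hβl
    subst ha
    have hγsum : γ.sum = 0 := by
      rw [List.sum_append] at hβsum
      simp at hβsum
      omega
    have hγdap : IsDyckAirPocket γ := by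
      refine ⟨fun x hx => hβe x (by simp [hx]), hβc.prefix ⟨[1], rfl⟩, ?_, hγsum⟩
      rw [prefix_sums_iff]
      intro i
      rcases le_or_gt i γ.length with hle | hlt
      · have := hβt i
        rwa [take_sum_append, Nat.sub_eq_zero_of_le hle, List.take_zero,
          List.sum_nil, add_zero] at this
      · rw [take_of_ge hlt.le, hγsum]
      
    have hγlen : γ.length = n := by
      rw [List.length_append] at hβlen
      simpa using hβlen
    refine ⟨Sum.inl ⟨γ, hγdap, hγlen⟩, ?_⟩
    apply Subtype.ext
    simp [← hd1]
  · -- d ≤ -2, use inr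
    have hd2' : d ≤ -2 := by omega
    obtain ⟨Q, α, hβeq, hQdap, hαt2, hαsum2⟩ :=
      split_pos hβe hβc hβt (by omega)
    have hαsum : α.sum = -(d + 1) := by omega
    have hαne : α ≠ [] := by
      intro h
      rw [h] at hαsum
      simp at hαsum
      omega
    have hαsuffix : α <:+ β := ⟨Q ++ [1], by simp [hβeq]⟩
    have hαlast : α.getLast? = some 1 := by
      rw [hβeq] at hβl
      have h1 : Q ++ 1 :: α = (Q ++ [1]) ++ α := by simp
      rw [h1, List.getLast?_append_of_ne_nil _ hαne] at hβl
      exact hβl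
    have hαe2 : ∀ x ∈ α, x = 1 ∨ x ≤ -1 := fun x hx => hβe x (hαsuffix.subset hx)
    have hαc2 : α.Chain' Rel := hβc.suffix hαsuffix
    have hRdap : IsDyckAirPocket (α ++ [d + 1]) :=
      build_concat hαe2 hαc2 hαt2 hαlast (by omega) hαsum
    have hlens : Q.length + 1 + α.length = n + 1 := by
      rw [hβeq] at hβlen
      simp at hβlen
      omega
    have hjle : α.length ≤ n := by omega
    refine ⟨Sum.inr ⟨⟨α.length, by omega⟩, ⟨Q, hQdap, by simp; omega⟩,
      ⟨α ++ [d + 1], hRdap, by simp⟩⟩, ?_⟩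
    apply Subtype.ext
    simp only [psi_inr_val, List.dropLast_concat, List.getLastD_concat]
    rw [hβeq]
    have : d + 1 - 1 = d := by ring
    rw [this]
    simp

end Part4

namespace Part5
open DAP Part2 Part3 Part4 List

lemma dap_nil : IsDyckAirPocket [] := by
  refine ⟨by simp, List.isChain_nil, ?_, by simp⟩
  intro p hp; simp [List.prefix_nil.mp hp]

instance unique0 : Unique (Dt 0) where
  default := ⟨[], dap_nil, rfl⟩
  uniq := by
    rintro ⟨l, hl, hlen⟩
    apply Subtype.ext
    simpa using List.length_eq_zero_iff.mp hlen

lemma card0 : Nat.card (Dt 0) = 1 := Nat.card_unique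

instance empty1 : IsEmpty (Dt 1) := by
  constructor
  rintro ⟨l, hl, hlen⟩
  obtain ⟨a, rfl⟩ := List.length_eq_one_iff.mp hlen
  obtain ⟨h1, _, h3, h4⟩ := hl
  have := h1 a (by simp)
  simp at h4
  omega

lemma card1 : Nat.card (Dt 1) = 0 := by simp

lemma card_rec (n : ℕ) :
    Nat.card (Dt (n+2)) =
      Nat.card (Dt n) + ∑ j : Fin (n+1), Nat.card (Dt (n - j.1)) * Nat.card (Dt (j.1+1)) := by
  have e := Equiv.ofBijective _ ⟨psi_inj n, psi_surj n⟩
  rw [← Nat.card_congr e, Nat.card_sum]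
  congr 1
  letI := fun j : Fin (n+1) => Fintype.ofFinite (Dt (n - j.1) × Dt (j.1+1))
  letI : Fintype (Σ j : Fin (n+1), Dt (n - j.1) × Dt (j.1+1)) := Sigma.instFintype
  rw [Nat.card_eq_fintype_card, Fintype.card_sigma]
  congr 1
  funext j
  rw [← Nat.card_eq_fintype_card, Nat.card_prod]

end Part5

set_option maxHeartbeats 2000000 in
/-- for 0 < z < 1/4 the counting series F(z) = ∑ c_n z^n of Dyck
paths with air pockets converges to s₂(z) = (1 + z − z² − √(z⁴−2z³−z²−2z+1))/(2z). -/
theorem stmt5 (z : ℝ) (hz : 0 < z) (hz' : z < 1/4) :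
    HasSum
      (fun n : ℕ =>
        (Nat.card {l : List ℤ // IsDyckAirPocket l ∧ l.length = n} : ℝ) * z ^ n)
      ((1 + z - z^2 - Real.sqrt (z^4 - 2*z^3 - z^2 - 2*z + 1)) / (2*z)) := by
  classical
  open DAP Part2 Part3 Part4 Part5 Finset in
  -- the counting sequence
  set c : ℕ → ℝ := fun n => (Nat.card (Dt n) : ℝ) with hc
  set f : ℕ → ℝ := fun n => c n * z ^ n with hfdef
  have hc0 : c 0 = 1 := by simp [hc, Part5.card0]
  have hc1 : c 1 = 0 := by simp [hc, Part5.card1]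
  have hcpos : ∀ n, 0 ≤ c n := fun n => Nat.cast_nonneg _
  have hcb : ∀ n, c n ≤ 4 ^ n := by
    intro n
    have := DAP.card_le n
    calc c n ≤ ((4 ^ n : ℕ) : ℝ) := Nat.cast_le.mpr this
    _ = 4 ^ n := by push_cast; ring
  have hrec : ∀ n, c (n+2) = c n + ∑ j ∈ range (n+1), c (n-j) * c (j+1) := by
    intro n
    have h := Part5.card_rec n
    have : c (n + 2) = ((Nat.card (Dt n) +
        ∑ j : Fin (n+1), Nat.card (Dt (n - j.1)) * Nat.card (Dt (j.1+1)) : ℕ) : ℝ) := by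
      rw [hc]; exact_mod_cast congrArg _ h
    rw [this]
    push_cast
    congr 1
    rw [← Fin.sum_univ_eq_sum_range (fun j => c (n - j) * c (j + 1)) (n+1)]
  -- summability
  have hf0 : ∀ n, 0 ≤ f n := fun n => mul_nonneg (hcpos n) (by positivity)
  have hfle : ∀ n, f n ≤ (4*z) ^ n := by
    intro n
    rw [hfdef, mul_pow]
    exact mul_le_mul_of_nonneg_right (hcb n) (by positivity)
  have hsum : Summable f := by
    refine Summable.of_nonneg_of_le hf0 hfle ?_
    exact summable_geometric_of_lt_one (by positivity) (by linarith)
  have hnorm : Summable fun n => ‖f n‖ := by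
    simpa only [Real.norm_eq_abs, abs_of_nonneg (hf0 _)] using hsum
  have hprod : Summable (fun p : ℕ × ℕ => f p.1 * f p.2) :=
    summable_mul_of_summable_norm hnorm hnorm
  set g : ℕ → ℝ := fun n => ∑ p ∈ antidiagonal n, f p.1 * f p.2 with hgdef
  have hgsum : Summable g := summable_sum_mul_antidiagonal_of_summable_mul hprod
  set S : ℝ := ∑' n, f n with hSdef
  have hSS : S * S = ∑' n, g n := hsum.tsum_mul_tsum_eq_tsum_sum_antidiagonal hsum hprod
  have hfzero : f 0 = 1 := by simp [hfdef, hc0]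
  have hfone : f 1 = 0 := by simp [hfdef, hc1]
  have hg0 : g 0 = 1 := by
    simp [hgdef, hfzero]
  -- pointwise recurrence for f
  have hpt : ∀ n, f (n+2) = z^2 * f n + z * (g (n+1) - f (n+1)) := by
    intro n
    have hgsplit : g (n+1) = (∑ k ∈ range (n+1), f k * f (n+1-k)) + f (n+1) * f 0 := by
      simp only [hgdef]
      rw [Finset.Nat.sum_antidiagonal_eq_sum_range_succ_mk]
      rw [Finset.sum_range_succ]
      simp
    have hreflect : ∑ k ∈ range (n+1), f k * f (n+1-k)
        = ∑ j ∈ range (n+1), f (n-j) * f (j+1) := by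
      rw [← Finset.sum_range_reflect (fun k => f k * f (n+1-k)) (n+1)]
      refine Finset.sum_congr rfl ?_
      intro j hj
      have hj' : j ≤ n := by simpa [Nat.lt_succ_iff] using hj
      have h1 : n + 1 - 1 - j = n - j := by omega
      have h2 : n + 1 - (n - j) = j + 1 := by omega
      rw [h1, h2]
    have hsum2 : ∑ j ∈ range (n+1), f (n-j) * f (j+1)
        = z^(n+1) * ∑ j ∈ range (n+1), c (n-j) * c (j+1) := by
      rw [Finset.mul_sum]
      refine Finset.sum_congr rfl ?_
      intro j hj
      have hj' : j ≤ n := by simpa [Nat.lt_succ_iff] using hj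
      simp only [hfdef]
      rw [show (c (n-j) * z^(n-j)) * (c (j+1) * z^(j+1)) = c (n-j) * c (j+1) * (z^(n-j) * z^(j+1)) by ring,
        ← pow_add, show n - j + (j+1) = n + 1 by omega]
      ring
    have := hrec n
    simp only [hfdef]
    rw [this]
    rw [hgsplit, hreflect, hsum2, hfzero]
    simp only [hfdef]
    ring
  -- the quadratic satisfied by S
  have hshift1 : Summable (fun n => f (n+1)) := by
    rw [summable_nat_add_iff]; exact hsum
  have hshift2 : Summable (fun n => f (n+2)) := by
    rw [summable_nat_add_iff]; exact hsum
  have hgshift : Summable (fun n => g (n+1)) := by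
    rw [summable_nat_add_iff]; exact hgsum
  have hS1 : S = f 0 + ∑' n, f (n+1) := Summable.tsum_eq_zero_add hsum
  have hS2 : ∑' n, f (n+1) = f 1 + ∑' n, f (n+2) := Summable.tsum_eq_zero_add hshift1
  have hg1 : ∑' n, g n = g 0 + ∑' n, g (n+1) := Summable.tsum_eq_zero_add hgsum
  have htail : ∑' n, f (n+2) = z^2 * S + z * ((∑' n, g (n+1)) - (∑' n, f (n+1))) := by
    calc ∑' n, f (n+2) = ∑' n, (z^2 * f n + z * (g (n+1) - f (n+1))) := by
          exact tsum_congr hpt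
    _ = (∑' n, z^2 * f n) + ∑' n, z * (g (n+1) - f (n+1)) := by
          refine Summable.tsum_add (hsum.mul_left _) ?_
          exact ((hgshift.sub hshift1).mul_left _)
    _ = z^2 * S + z * ((∑' n, g (n+1)) - (∑' n, f (n+1))) := by
          rw [tsum_mul_left, tsum_mul_left, Summable.tsum_sub hgshift hshift1]
  have hquad : z*S^2 - (1 + z - z^2)*S + 1 = 0 := by
    have e1 : ∑' n, g (n+1) = S * S - 1 := by
      rw [← hSS] at hg1; rw [hg0] at hg1; linarith
    have e2 : ∑' n, f (n+1) = S - 1 := by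
      rw [hfzero] at hS1; linarith
    have e3 : S = 1 + (0 + (z^2 * S + z * ((S*S - 1) - (S - 1)))) := by
      rw [← e1, ← e2, ← htail, ← hfone, ← hS2, ← hfzero, ← hS1]
    nlinarith [e3]
  -- the bound S ≤ x
  set Δ : ℝ := z^4 - 2*z^3 - z^2 - 2*z + 1 with hΔdef
  have hΔ : 0 ≤ Δ := by
    have h1 : 0 < z^2 - 3*z + 1 := by nlinarith
    have h2 : 0 < z^2 + z + 1 := by nlinarith
    have : Δ = (z^2 - 3*z + 1) * (z^2 + z + 1) := by rw [hΔdef]; ring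
    rw [this]; positivity
  set s : ℝ := Real.sqrt Δ with hsdef
  have hs2 : s^2 = Δ := Real.sq_sqrt hΔ
  have hs0 : 0 ≤ s := Real.sqrt_nonneg _
  have hsle : s ≤ 1 - z - z^2 := by
    have h1 : Δ ≤ (1 - z - z^2)^2 := by rw [hΔdef]; nlinarith
    have h2 : s ≤ Real.sqrt ((1 - z - z^2)^2) := Real.sqrt_le_sqrt h1
    rwa [Real.sqrt_sq (by nlinarith)] at h2
  set x : ℝ := ((1 + z - z^2) - s) / (2*z) with hxdef
  have h2zx : 2*z*x = (1 + z - z^2) - s := by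
    rw [hxdef]; field_simp
  have hx1 : 1 ≤ x := by
    rw [hxdef, le_div_iff₀ (by linarith)]
    linarith
  have hfix : z*x^2 - (1 + z - z^2)*x + 1 = 0 := by
    have h4 : (2*z*x)^2 - 2*(1 + z - z^2)*(2*z*x) + 4*z = 0 := by
      rw [h2zx]
      linear_combination hs2
    have h5 : 4*z*(z*x^2 - (1 + z - z^2)*x + 1) = 0 := by linear_combination h4
    have h6 : (4*z) ≠ 0 := by positivity
    exact (mul_eq_zero.mp h5).resolve_left h6
  -- partial sums
  set T : ℕ → ℝ := fun N => ∑ n ∈ range N, f n with hTdef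
  have hT1le : ∀ N, 1 ≤ T (N+1) := by
    intro N
    have : T 1 ≤ T (N+1) := by
      refine Finset.sum_le_sum_of_subset_of_nonneg ?_ (fun i _ _ => hf0 i)
      exact Finset.range_subset_range.mpr (by omega)
    have : (1:ℝ) ≤ T (N+1) := by
      simp only [hTdef] at this ⊢
      simp only [Finset.sum_range_one, hfzero] at this
      exact this
    exact this
  have hG : ∀ M, ∑ m ∈ range M, g m ≤ (T M)^2 := by
    intro M
    have hdisj : (↑(range M) : Set ℕ).PairwiseDisjoint (fun m => antidiagonal m) := by
      intro a _ b _ hab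
      simp only [Finset.disjoint_left]
      intro p hp hp2
      rw [Finset.HasAntidiagonal.mem_antidiagonal] at hp hp2
      exact hab (by omega)
    have h1 : ∑ m ∈ range M, g m
        = ∑ p ∈ (range M).biUnion (fun m => antidiagonal m), f p.1 * f p.2 :=
      (Finset.sum_biUnion hdisj).symm
    have h2 : (range M).biUnion (fun m => antidiagonal m) ⊆ range M ×ˢ range M := by
      intro p hp
      simp only [Finset.mem_biUnion] at hp
      obtain ⟨m, hm, hpm⟩ := hp
      rw [Finset.HasAntidiagonal.mem_antidiagonal] at hpm
      rw [Finset.mem_range] at hm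
      rw [Finset.mem_product, Finset.mem_range, Finset.mem_range]
      omega
    have h3 : ∑ p ∈ (range M).biUnion (fun m => antidiagonal m), f p.1 * f p.2
        ≤ ∑ p ∈ range M ×ˢ range M, f p.1 * f p.2 := by
      refine Finset.sum_le_sum_of_subset_of_nonneg h2 ?_
      intro p _ _
      exact mul_nonneg (hf0 _) (hf0 _)
    have h4 : ∑ p ∈ range M ×ˢ range M, f p.1 * f p.2 = (T M)^2 := by
      rw [Finset.sum_product, hTdef]
      rw [sq, Finset.sum_mul_sum]
    rw [h1]
    rw [← h4]
    exact h3
  have hTrec : ∀ N, T (N+3)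
      = 1 + z^2 * T (N+1) + z * (∑ m ∈ range (N+2), g m) - z * T (N+2) := by
    intro N
    have hpeel : ∀ (F : ℕ → ℝ) (M : ℕ), ∑ n ∈ range (M+1), F n = (∑ n ∈ range M, F (n+1)) + F 0 :=
      fun F M => Finset.sum_range_succ' F M
    have e1 : T (N+3) = (∑ n ∈ range (N+1), f (n+2)) + f 1 + f 0 := by
      simp only [hTdef]
      rw [hpeel f (N+2), hpeel (fun n => f (n+1)) (N+1)]
    have e2 : ∑ n ∈ range (N+1), f (n+2)
        = z^2 * T (N+1) + z * (∑ n ∈ range (N+1), g (n+1)) - z * (∑ n ∈ range (N+1), f (n+1)) := by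
      rw [Finset.sum_congr rfl (fun n _ => hpt n)]
      rw [Finset.sum_add_distrib, ← Finset.mul_sum, ← Finset.mul_sum, hTdef]
      rw [Finset.sum_sub_distrib, mul_sub]
      ring
    have e3 : ∑ n ∈ range (N+1), g (n+1) = (∑ m ∈ range (N+2), g m) - 1 := by
      rw [hpeel g (N+1), hg0]; ring
    have e4 : ∑ n ∈ range (N+1), f (n+1) = T (N+2) - 1 := by
      simp only [hTdef]
      rw [hpeel f (N+1), hfzero]; ring
    rw [e1, e2, e3, e4, hfone, hfzero]
    ring
  have hTle : ∀ N, T N ≤ x := by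
    intro N
    induction N using Nat.strong_induction_on with
    | _ N ih =>
      match N with
      | 0 => simp only [hTdef]; simp; linarith
      | 1 => simp only [hTdef]; simp [hfzero]; linarith
      | 2 =>
        simp only [hTdef]
        rw [Finset.sum_range_succ, Finset.sum_range_one, hfzero, hfone]
        linarith
      | (M+3) =>
        have ih1 := ih (M+1) (by omega)
        have ih2 := ih (M+2) (by omega)
        have hb1 := hT1le (M+1)
        have hGb := hG (M+2)
        have := hTrec M
        rw [this]
        have key : z * (∑ m ∈ range (M+2), g m) ≤ z * (T (M+2))^2 :=
          mul_le_mul_of_nonneg_left hGb hz.le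
        have hmono : z * (T (M+2))^2 - z * T (M+2) ≤ z * x^2 - z * x := by
          have h1 : 0 ≤ x - T (M+2) := by linarith
          have h2 : 0 ≤ x + T (M+2) - 1 := by linarith
          nlinarith [mul_nonneg (mul_nonneg hz.le h1) h2]
        nlinarith [key, hmono, ih1, hfix, sq_nonneg (T (M+2))]
  have hSx : S ≤ x := Real.tsum_le_of_sum_range_le hf0 hTle
  -- pin down the root
  have hroot : (2*z*S - (1 + z - z^2) + s) * (2*z*S - (1 + z - z^2) - s) = 0 := by
    linear_combination (4*z) * hquad - hs2
  have h2zxS : 2*z*S ≤ 2*z*x := by nlinarith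
  have hSeq : 2*z*S - (1 + z - z^2) = -s := by
    rcases mul_eq_zero.mp hroot with h | h
    · linarith
    · -- 2zS - B = s, but also ≤ -s
      have : 2*z*S - (1 + z - z^2) ≤ -s := by
        rw [h2zx] at h2zxS; linarith
      linarith
  have hSx2 : S = x := by
    rw [hxdef]
    rw [eq_div_iff (by positivity)]
    linarith
  have hfs : HasSum f S := hsum.hasSum
  rw [hSx2] at hfs
  exact hfs
end

section
/- Let s₂ be the root of z u² + (z² − z − 1)u + 1 = 0 given by the minus sign of the quadratic formula, and set F(1) = 1/(1 − z s₂). Then 1 − s₂ + z² s₂ F(1) = 0; that is, u = s₂ is also a root of the numerator 1 − u + z² u F(1), so the factor (u − s₂) cancels in F(u) = (1 − u + z² u F(1))/(z(u − s₁)(u − s₂)). -/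
/-!
Clearing the denominator `1 - z s₂` turns `1 - s₂ + z² s₂ F(1)` into
`(1 - s₂)(1 - z s₂) + z² s₂ = z s₂² + (z² - z - 1) s₂ + 1`, the kernel polynomial at `s₂`,
which vanishes because `s₂` is one of its roots.
-/

lemma kernel_eq_zero_of_eq_quadratic_root_minus {z s : ℝ} (hz : z ≠ 0)
    (hdisc : 0 ≤ z^4 - 2*z^3 - z^2 - 2*z + 1)
    (hs : s = (1 + z - z^2 - Real.sqrt (z^4 - 2*z^3 - z^2 - 2*z + 1)) / (2*z)) :
    z * s^2 + (z^2 - z - 1) * s + 1 = 0 := by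
  have hdiscrim : discrim z (z^2 - z - 1) 1 =
      Real.sqrt (z^4 - 2*z^3 - z^2 - 2*z + 1) * Real.sqrt (z^4 - 2*z^3 - z^2 - 2*z + 1) := by
    rw [Real.mul_self_sqrt hdisc, discrim]
    ring
  have hroot := (quadratic_eq_zero_iff hz hdiscrim s).mpr (Or.inr (by rw [hs]; ring))
  linear_combination hroot

lemma one_sub_add_sq_mul_div_eq_zero_of_kernel_root {z s : ℝ} (hzs : z * s ≠ 1)
    (hs : z * s^2 + (z^2 - z - 1) * s + 1 = 0) :
    1 - s + z^2 * s * (1 / (1 - z * s)) = 0 := by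
  have hinv : (1 - z * s) * (1 / (1 - z * s)) = 1 :=
    mul_one_div_cancel (sub_ne_zero.mpr (Ne.symm hzs))
  linear_combination (1 / (1 - z * s)) * hs + (s - 1) * hinv

/-- with s₂ the minus-sign root of z u² + (z² − z − 1)u + 1 = 0 and
F(1) = 1/(1 − z s₂), the numerator 1 − u + z² u F(1) vanishes at u = s₂. -/
theorem stmt8 (z s₂ F1 : ℝ) (hz : z ≠ 0) (hzs : z * s₂ ≠ 1)
    (hdisc : 0 ≤ z^4 - 2*z^3 - z^2 - 2*z + 1)
    (hs₂ : s₂ = (1 + z - z^2 - Real.sqrt (z^4 - 2*z^3 - z^2 - 2*z + 1)) / (2*z))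
    (hF1 : F1 = 1 / (1 - z * s₂)) :
    1 - s₂ + z^2 * s₂ * F1 = 0 := by
  rw [hF1]
  exact one_sub_add_sq_mul_div_eq_zero_of_kernel_root hzs
    (kernel_eq_zero_of_eq_quadratic_root_minus hz hdisc hs₂)
end

section
/- In the right-to-left model, define b_k (k ≥ 0) by b₀ = s₂ − 1 and b_k = ((s₂ − 1)/z) s₂^{k−1} for k ≥ 1, where s₂ is the root of z u² + (z² − z − 1)u + 1 = 0 with the minus sign. Then for 0 < z < 1/4 these satisfy the recursions a_k = [k = 0] + z b_{k+1} and b_k = z b_{k+1} + z ∑_{0 ≤ j < k} a_j, where a_k = [k=0] + z b_{k+1}. -/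
/-!
The minus root `s` of `z u² + (z² - z - 1) u + 1 = 0` exists because the discriminant
`(z² - z - 1)² - 4z` is positive on `(0, 1/4)`. Substituting `b` gives `a₀ = s` and
`a_k = (s - 1) s^k` for `k ≥ 1`, so the partial sums of `a` telescope to `∑_{j ≤ k} a_j = s^(k+1)`.
The recursion for `b_{k+1}` then reduces, after clearing `z`, to `s^k` times the quadratic.
-/

theorem quadratic_eq_zero_of_eq_neg_sqrt_discrim {a b c x : ℝ} (ha : a ≠ 0)
    (hd : 0 ≤ discrim a b c) (hx : x = (-b - √(discrim a b c)) / (2 * a)) :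
    a * (x * x) + b * x + c = 0 :=
  (quadratic_eq_zero_iff ha (Real.mul_self_sqrt hd).symm x).2 (Or.inr hx)

lemma discrim_rightToLeft (z : ℝ) :
    discrim z (z ^ 2 - z - 1) 1 = z ^ 4 - 2 * z ^ 3 - z ^ 2 - 2 * z + 1 := by
  rw [discrim]; ring

lemma discrim_rightToLeft_nonneg {z : ℝ} (hz : 0 < z) (hz' : z < 1 / 4) :
    0 ≤ discrim z (z ^ 2 - z - 1) 1 := by
  rw [discrim_rightToLeft]
  nlinarith [pow_pos hz 3, pow_pos hz 4, sq_nonneg z]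

lemma sum_range_succ_eq_pow_of_telescoping {R : Type*} [CommRing R] {s : R} {a : ℕ → R}
    (ha0 : a 0 = s) (ha : ∀ k, a (k + 1) = (s - 1) * s ^ (k + 1)) (k : ℕ) :
    ∑ j ∈ Finset.range (k + 1), a j = s ^ (k + 1) := by
  induction k with
  | zero => simp [ha0]
  | succ k ih => rw [Finset.sum_range_succ, ih, ha]; ring

section RightToLeft

variable {z s : ℝ} {a b : ℕ → ℝ}

lemma rightToLeft_a_zero (hz : z ≠ 0) (hb : ∀ k ≥ 1, b k = ((s - 1) / z) * s ^ (k - 1))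
    (ha : ∀ k, a k = (if k = 0 then 1 else 0) + z * b (k + 1)) : a 0 = s := by
  rw [ha, hb 1 le_rfl, if_pos rfl]
  field_simp
  ring

lemma rightToLeft_a_succ (hz : z ≠ 0) (hb : ∀ k ≥ 1, b k = ((s - 1) / z) * s ^ (k - 1))
    (ha : ∀ k, a k = (if k = 0 then 1 else 0) + z * b (k + 1)) (k : ℕ) :
    a (k + 1) = (s - 1) * s ^ (k + 1) := by
  rw [ha, hb (k + 1 + 1) (by omega), if_neg k.succ_ne_zero, Nat.add_sub_cancel]
  field_simp
  ring

lemma rightToLeft_b_recursion (hz : z ≠ 0) (hs : z * (s * s) + (z ^ 2 - z - 1) * s + 1 = 0)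
    (hb0 : b 0 = s - 1) (hb : ∀ k ≥ 1, b k = ((s - 1) / z) * s ^ (k - 1))
    (ha : ∀ k, a k = (if k = 0 then 1 else 0) + z * b (k + 1)) (k : ℕ) :
    b k = z * b (k + 1) + z * ∑ j ∈ Finset.range k, a j := by
  cases k with
  | zero =>
    rw [hb0, hb 1 le_rfl, Finset.sum_range_zero]
    field_simp
    ring
  | succ k =>
    have hsum := sum_range_succ_eq_pow_of_telescoping (rightToLeft_a_zero hz hb ha)
      (rightToLeft_a_succ hz hb ha) k
    rw [hsum, hb (k + 1) (by omega), hb (k + 1 + 1) (by omega), Nat.add_sub_cancel, Nat.add_sub_cancel]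
    field_simp
    linear_combination (-s ^ k) * hs

end RightToLeft

/-- in the right-to-left model, b₀ = s₂ − 1 and
b_k = ((s₂ − 1)/z) s₂^{k−1} (k ≥ 1), together with a_k = [k = 0] + z b_{k+1},
satisfy a_k = [k = 0] + z b_{k+1} and b_k = z b_{k+1} + z ∑_{0 ≤ j < k} a_j. -/
theorem stmt9 (z s₂ : ℝ) (hz : 0 < z) (hz' : z < 1/4)
    (hs₂ : s₂ = (1 + z - z^2 - Real.sqrt (z^4 - 2*z^3 - z^2 - 2*z + 1)) / (2*z))
    (a b : ℕ → ℝ)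
    (hb0 : b 0 = s₂ - 1)
    (hb : ∀ k ≥ 1, b k = ((s₂ - 1) / z) * s₂ ^ (k - 1))
    (ha : ∀ k, a k = (if k = 0 then 1 else 0) + z * b (k + 1)) :
    (∀ k, a k = (if k = 0 then 1 else 0) + z * b (k + 1)) ∧
    (∀ k, b k = z * b (k + 1) + z * ∑ j ∈ Finset.range k, a j) := by
  have hs₂_root : z * (s₂ * s₂) + (z ^ 2 - z - 1) * s₂ + 1 = 0 := by
    refine quadratic_eq_zero_of_eq_neg_sqrt_discrim hz.ne' (discrim_rightToLeft_nonneg hz hz') ?_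
    rw [hs₂, discrim_rightToLeft]
    ring
  exact ⟨ha, rightToLeft_b_recursion hz.ne' hs₂_root hb0 hb ha⟩
end
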